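/- arXiv:1510.02838 — 3 statements merged into one kernel-verified Lean document; each statement's English description precedes it below -/
import Mathlib

section
/- Existence of a finite Markov basis (Diaconis–Sturmfels / Hilbert basis argument): for any integer matrix $A \in \mathbb{Z}^{d \times m}$, there exists a finite set $M \subseteq \ker_{\mathbb{Z}}(A) = \{z \in \mathbb{Z}^m : Az = 0\}$ such that for any two vectors $u, v \in \mathbb{Z}_{\ge 0}^m$ with $Au = Av$, there is a finite sequence $u = u_0, u_1, \dots, u_k = v$ with each $u_i \in \mathbb{Z}_{\ge 0}^m$ and each difference $u_{i+1} - u_i \in M \cup (-M)$. -/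
/-!
Pairs `(a, b)` of nonnegative vectors with `A a = A b` form a submonoid `S` of `ℕᵐ × ℕᵐ` that is
closed under subtracting a smaller element of `S`. Hence every element of `S` is a sum of minimal
nonzero elements of `S`, and these form an antichain, which is finite by Dickson's lemma.
The differences `b - a` of the minimal pairs form a Markov basis: if `(u, v) = ∑ᵢ (aᵢ, bᵢ)`,
exchanging the summands `aᵢ` for `bᵢ` one at a time walks from `u` to `v` through nonnegative
vectors.
-/

namespace MarkovBasis

section Decomposition

variable {α : Type*} [AddCommMonoid α] [PartialOrder α]

def minimalNonzero (S : Set α) : Set α := {g | Minimal (· ∈ S \ {0}) g}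

theorem finite_minimalNonzero [WellQuasiOrderedLE α] (S : Set α) : (minimalNonzero S).Finite :=
  WellQuasiOrderedLE.finite_of_isAntichain (setOfPred_minimal_antichain _)

variable [CanonicallyOrderedAdd α] [Sub α] [OrderedSub α]

theorem tsub_lt_self_of_le [IsRightCancelAdd α] {a b : α} (hba : b ≤ a) (hb : b ≠ 0) :
    a - b < a := by
  refine tsub_le_self.lt_of_ne fun h => hb ?_
  have hab := tsub_add_cancel_of_le hba
  rw [h, add_comm] at hab
  exact add_eq_right.mp hab

theorem exists_list_minimalNonzero_sum_eq [IsRightCancelAdd α] [WellFoundedLT α] {S : Set α}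
    (hS : ∀ s ∈ S, ∀ t ∈ S, t ≤ s → s - t ∈ S) {s : α} (hs : s ∈ S) :
    ∃ l : List α, (∀ g ∈ l, g ∈ minimalNonzero S) ∧ l.sum = s := by
  induction s using WellFoundedLT.induction with
  | _ s ih =>
    by_cases hs0 : s = 0
    · exact ⟨[], by simp, by simp [hs0]⟩
    obtain ⟨g, hgs, hg⟩ := exists_minimal_le_of_wellFoundedLT (· ∈ S \ {0}) s ⟨hs, hs0⟩
    obtain ⟨l, hl, hsum⟩ :=
      ih (s - g) (tsub_lt_self_of_le hgs hg.prop.2) (hS s hs g hg.prop.1 hgs)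
    refine ⟨g :: l, ?_, ?_⟩
    · simpa only [List.mem_cons, forall_eq_or_imp] using ⟨hg, hl⟩
    · rw [List.sum_cons, hsum, add_tsub_cancel_of_le hgs]

end Decomposition

section Walk

variable {M : Type*} [AddCommMonoid M]

/-- The `i`-th point of the walk that replaces `(l[j]).1` by `(l[j]).2` for `j < i`. -/
def exchangeWalk (l : List (M × M)) (i : ℕ) : M :=
  ((l.take i).map Prod.snd).sum + ((l.drop i).map Prod.fst).sum

theorem exchangeWalk_zero (l : List (M × M)) : exchangeWalk l 0 = l.sum.1 := by
  simpa [exchangeWalk] using (map_list_sum (AddMonoidHom.fst M M) l).symm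

theorem exchangeWalk_length (l : List (M × M)) : exchangeWalk l l.length = l.sum.2 := by
  simpa [exchangeWalk] using (map_list_sum (AddMonoidHom.snd M M) l).symm

theorem exchangeWalk_succ_add {l : List (M × M)} {i : ℕ} (hi : i < l.length) :
    exchangeWalk l (i + 1) + l[i].1 = exchangeWalk l i + l[i].2 := by
  simp only [exchangeWalk, ← List.take_concat_get' l i hi, List.drop_eq_getElem_cons hi,
    List.map_append, List.map_cons, List.map_nil, List.sum_append, List.sum_cons, List.sum_nil]
  abel

end Walk

section Equalizer

variable {α G : Type*} [AddCommMonoid α] [PartialOrder α] [CanonicallyOrderedAdd α] [Sub α]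
  [OrderedSub α] [AddCommMonoid G] [IsRightCancelAdd G]

def equalizerPairs (φ : α →+ G) : Set (α × α) := {p | φ p.1 = φ p.2}

theorem tsub_mem_equalizerPairs {φ : α →+ G} {p q : α × α} (hp : p ∈ equalizerPairs φ)
    (hq : q ∈ equalizerPairs φ) (hqp : q ≤ p) : p - q ∈ equalizerPairs φ := by
  have h₁ := congrArg φ (tsub_add_cancel_of_le hqp.1)
  have h₂ := congrArg φ (tsub_add_cancel_of_le hqp.2)
  rw [map_add] at h₁ h₂
  refine add_right_cancel (b := φ q.1) ?_
  change φ (p.1 - q.1) + φ q.1 = φ (p.2 - q.2) + φ q.1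
  rw [h₁, hq, h₂]
  exact hp

end Equalizer

end MarkovBasis

open MarkovBasis in
theorem stmt_11 {d m : ℕ} (A : Matrix (Fin d) (Fin m) ℤ) :
    ∃ M : Finset (Fin m → ℤ),
      (∀ z ∈ M, A.mulVec z = 0) ∧
      ∀ u v : Fin m → ℤ, (∀ j, 0 ≤ u j) → (∀ j, 0 ≤ v j) →
        A.mulVec u = A.mulVec v →
        ∃ (k : ℕ) (w : ℕ → Fin m → ℤ),
          w 0 = u ∧ w k = v ∧
          (∀ i ≤ k, ∀ j, 0 ≤ w i j) ∧
          ∀ i < k, (w (i + 1) - w i ∈ M ∨ -(w (i + 1) - w i) ∈ M) := by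
  let c : (Fin m → ℕ) →+ (Fin m → ℤ) := (Nat.castAddMonoidHom ℤ).compLeft (Fin m)
  let S := equalizerPairs (A.mulVecLin.toAddMonoidHom.comp c)
  refine ⟨(finite_minimalNonzero S).toFinset.image fun g => c g.2 - c g.1, ?_, ?_⟩
  · simp only [Finset.mem_image, Set.Finite.mem_toFinset, forall_exists_index, and_imp]
    rintro _ g hg rfl
    exact (Matrix.mulVec_sub _ _ _).trans (sub_eq_zero.mpr hg.prop.1.symm)
  intro u v hu hv huv
  lift u to Fin m → ℕ using hu
  lift v to Fin m → ℕ using hv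
  have huv : (u, v) ∈ S := huv
  obtain ⟨l, hl, hsum⟩ :=
    exists_list_minimalNonzero_sum_eq (fun p hp q hq => tsub_mem_equalizerPairs hp hq) huv
  refine ⟨l.length, fun i => c (exchangeWalk l i), ?_, ?_, fun i _ j => Int.natCast_nonneg _, ?_⟩
  · show c _ = c u
    rw [exchangeWalk_zero, hsum]
  · show c _ = c v
    rw [exchangeWalk_length, hsum]
  intro i hi
  refine Or.inl (Finset.mem_image.mpr ⟨l[i], by simpa using hl _ (List.getElem_mem hi), ?_⟩)
  rw [sub_eq_sub_iff_add_eq_add, ← map_add, ← map_add, exchangeWalk_succ_add hi, add_comm]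
end

section
/- Conformal decomposition into primitive elements: for any integer matrix $A \in \mathbb{Z}^{d\times m}$, every nonzero $z \in \ker_{\mathbb{Z}}(A)$ can be written as a finite sum $z = g_1 + \dots + g_r$ of primitive elements $g_i \in \ker_{\mathbb{Z}}(A)$ each conformal to $z$ (i.e., for every coordinate $j$, $g_i^{(j)} z^{(j)} \ge 0$ and $|g_i^{(j)}| \le |z^{(j)}|$). -/
/-- `g` is conformal to `z`: componentwise same signs and no larger absolute value. -/
def ConformalTo {m : ℕ} (g z : Fin m → ℤ) : Prop :=
  ∀ j, 0 ≤ g j * z j ∧ |g j| ≤ |z j|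

/-- A primitive (Graver basis) element of the integer kernel of `A`. -/
def PrimitiveKer {d m : ℕ} (A : Matrix (Fin d) (Fin m) ℤ) (g : Fin m → ℤ) : Prop :=
  A.mulVec g = 0 ∧ g ≠ 0 ∧
    ∀ g' : Fin m → ℤ, A.mulVec g' = 0 → g' ≠ 0 → g' ≠ g → ¬ ConformalTo g' g

/-! Induction on the `ℓ¹`-norm. A nonzero kernel element `z` that is not primitive has a
conformal kernel element `g ∉ {0, z}`; then `z - g` is conformal to `z` as well, and
`‖z‖₁ = ‖g‖₁ + ‖z - g‖₁`, so both pieces are strictly smaller and decompose by induction.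
Conformality is transitive, so their primitive pieces are conformal to `z`. -/

theorem Int.mul_nonneg_and_abs_le_abs_iff (a b : ℤ) :
    0 ≤ a * b ∧ |a| ≤ |b| ↔ 0 ≤ a ∧ a ≤ b ∨ b ≤ a ∧ a ≤ 0 := by
  constructor
  · rintro ⟨hab, habs⟩
    rcases le_total 0 a with ha | ha <;> rcases le_total 0 b with hb | hb
    all_goals first
      | (rw [abs_of_nonneg ha, abs_of_nonneg hb] at habs; omega)
      | (rw [abs_of_nonpos ha, abs_of_nonpos hb] at habs; omega)
      | (have : a * b ≤ 0 := by nlinarith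
         rcases mul_eq_zero.mp (le_antisymm this hab) with rfl | rfl <;> simp_all)
  · rintro (⟨ha, hab⟩ | ⟨hab, ha⟩)
    · exact ⟨mul_nonneg ha (ha.trans hab), abs_le_abs_of_nonneg ha hab⟩
    · exact ⟨mul_nonneg_of_nonpos_of_nonpos ha (hab.trans ha), abs_le_abs_of_nonpos ha hab⟩

theorem conformalTo_iff {m : ℕ} {g z : Fin m → ℤ} :
    ConformalTo g z ↔ ∀ j, 0 ≤ g j ∧ g j ≤ z j ∨ z j ≤ g j ∧ g j ≤ 0 :=
  forall_congr' fun j => Int.mul_nonneg_and_abs_le_abs_iff (g j) (z j)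

namespace ConformalTo

variable {m : ℕ} {g z w : Fin m → ℤ}

theorem refl (z : Fin m → ℤ) : ConformalTo z z :=
  conformalTo_iff.2 fun j => by omega

theorem trans (hgz : ConformalTo g z) (hzw : ConformalTo z w) : ConformalTo g w := by
  rw [conformalTo_iff] at *
  intro j
  have := hgz j
  have := hzw j
  omega

theorem sub_left (h : ConformalTo g z) : ConformalTo (z - g) z := by
  rw [conformalTo_iff] at *
  intro j
  have := h j
  simp only [Pi.sub_apply]
  omega

end ConformalTo

def l1Norm {ι : Type*} [Fintype ι] (z : ι → ℤ) : ℕ :=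
  ∑ j, (z j).natAbs

theorem l1Norm_pos {ι : Type*} [Fintype ι] {z : ι → ℤ} (hz : z ≠ 0) : 0 < l1Norm z := by
  obtain ⟨j, hj⟩ := Function.ne_iff.mp hz
  exact Finset.sum_pos' (fun _ _ => Nat.zero_le _) ⟨j, Finset.mem_univ j, Int.natAbs_pos.2 hj⟩

theorem ConformalTo.l1Norm_add_l1Norm_sub {m : ℕ} {g z : Fin m → ℤ} (h : ConformalTo g z) :
    l1Norm g + l1Norm (z - g) = l1Norm z := by
  rw [l1Norm, l1Norm, l1Norm, ← Finset.sum_add_distrib]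
  refine Finset.sum_congr rfl fun j _ => ?_
  have := conformalTo_iff.1 h j
  simp only [Pi.sub_apply]
  omega

def HasPrimitiveConformalDecomposition {d m : ℕ} (A : Matrix (Fin d) (Fin m) ℤ)
    (z : Fin m → ℤ) : Prop :=
  ∃ (r : ℕ) (gs : Fin r → Fin m → ℤ),
    z = ∑ i, gs i ∧ ∀ i, PrimitiveKer A (gs i) ∧ ConformalTo (gs i) z

namespace HasPrimitiveConformalDecomposition

variable {d m : ℕ} {A : Matrix (Fin d) (Fin m) ℤ} {g z : Fin m → ℤ}

theorem zero : HasPrimitiveConformalDecomposition A 0 :=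
  ⟨0, Fin.elim0, by simp, fun i => i.elim0⟩

theorem of_primitiveKer (hz : PrimitiveKer A z) : HasPrimitiveConformalDecomposition A z :=
  ⟨1, fun _ => z, by simp, fun _ => ⟨hz, ConformalTo.refl z⟩⟩

theorem add_sub (hgz : ConformalTo g z) (hg : HasPrimitiveConformalDecomposition A g)
    (hzg : HasPrimitiveConformalDecomposition A (z - g)) :
    HasPrimitiveConformalDecomposition A z := by
  obtain ⟨r, gs, hg_sum, hgs⟩ := hg
  obtain ⟨s, hs, hzg_sum, hhs⟩ := hzg
  refine ⟨r + s, Fin.append gs hs, ?_, Fin.addCases (fun i => ?_) (fun i => ?_)⟩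
  · rw [Fin.sum_univ_add]
    simp only [Fin.append_left, Fin.append_right, ← hg_sum, ← hzg_sum, add_sub_cancel]
  · rw [Fin.append_left]
    exact ⟨(hgs i).1, (hgs i).2.trans hgz⟩
  · rw [Fin.append_right]
    exact ⟨(hhs i).1, (hhs i).2.trans hgz.sub_left⟩

end HasPrimitiveConformalDecomposition

theorem hasPrimitiveConformalDecomposition_of_mulVec_eq_zero {d m : ℕ}
    (A : Matrix (Fin d) (Fin m) ℤ) (z : Fin m → ℤ) (hz : A.mulVec z = 0) :
    HasPrimitiveConformalDecomposition A z := by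
  by_cases hz0 : z = 0
  · exact hz0 ▸ .zero
  by_cases hprim : PrimitiveKer A z
  · exact .of_primitiveKer hprim
  obtain ⟨g, hg, hg0, hgz, hconf⟩ :
      ∃ g, A.mulVec g = 0 ∧ g ≠ 0 ∧ g ≠ z ∧ ConformalTo g z := by
    simpa [PrimitiveKer, hz, hz0] using hprim
  have hzg : A.mulVec (z - g) = 0 := by rw [Matrix.mulVec_sub, hz, hg, sub_zero]
  have hnorm := hconf.l1Norm_add_l1Norm_sub
  have hpos_g := l1Norm_pos hg0
  have hpos_zg := l1Norm_pos (sub_ne_zero.2 hgz.symm)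
  exact .add_sub hconf (hasPrimitiveConformalDecomposition_of_mulVec_eq_zero A g hg)
    (hasPrimitiveConformalDecomposition_of_mulVec_eq_zero A (z - g) hzg)
termination_by l1Norm z
decreasing_by all_goals omega

theorem stmt_12_general {d m : ℕ} (A : Matrix (Fin d) (Fin m) ℤ)
    (z : Fin m → ℤ) (hz : A.mulVec z = 0) :
    ∃ (r : ℕ) (gs : Fin r → Fin m → ℤ),
      z = ∑ i, gs i ∧ ∀ i, PrimitiveKer A (gs i) ∧ ConformalTo (gs i) z :=
  hasPrimitiveConformalDecomposition_of_mulVec_eq_zero A z hz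

theorem stmt_12 {d m : ℕ} (A : Matrix (Fin d) (Fin m) ℤ)
    (z : Fin m → ℤ) (hz : A.mulVec z = 0) (hz0 : z ≠ 0) :
    ∃ (r : ℕ) (gs : Fin r → Fin m → ℤ),
      z = ∑ i, gs i ∧ ∀ i, PrimitiveKer A (gs i) ∧ ConformalTo (gs i) z :=
  stmt_12_general A z hz
end

section
/- A threshold graph is the unique realization of its degree sequence: if $g$ is a threshold graph on $n$ labeled vertices (constructible from the empty graph by repeatedly adding either an isolated vertex or a dominating vertex), and $g'$ is any simple graph on the same vertex set with $\deg_{g'}(v) = \deg_g(v)$ for all $v$, then $g' = g$. -/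
/-!
Process the vertices in the threshold order from last to first. Once the edges from `v` to all
later vertices are known to agree in `g` and `g'`, equality of degrees forces the edges from `v`
to earlier vertices to agree as well: in `g` the vertex `v` sees either none or all of them, so
one neighbourhood of `v` contains the other, and neighbourhoods of equal size are then equal.
-/

/-- A threshold graph on `Fin n`: there is an order in which the vertices can be
added one at a time, each new vertex being either isolated (adjacent to no
earlier vertex) or dominating (adjacent to every earlier vertex). -/
def IsThreshold {n : ℕ} (g : SimpleGraph (Fin n)) : Prop :=
  ∃ (σ : Equiv.Perm (Fin n)) (c : Fin n → Bool),
    ∀ i j : Fin n, i < j → (g.Adj (σ i) (σ j) ↔ c j = true)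

namespace SimpleGraph

variable {V : Type*}

def IsThresholdOrdered [LinearOrder V] (G : SimpleGraph V) : Prop :=
  ∀ j, (∀ i < j, G.Adj i j) ∨ (∀ i < j, ¬ G.Adj i j)

section Degree

variable [Fintype V] {G G' : SimpleGraph V} [DecidableRel G.Adj] [DecidableRel G'.Adj]

lemma neighborFinset_eq_of_subset_of_degree_le {v : V}
    (h : G.neighborFinset v ⊆ G'.neighborFinset v) (hd : G'.degree v ≤ G.degree v) :
    G.neighborFinset v = G'.neighborFinset v :=
  Finset.eq_of_subset_of_card_le h (by simpa using hd)

lemma neighborFinset_eq_of_adj_iff_of_degree_eq [LinearOrder V] {v : V}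
    (hG : (∀ u < v, G.Adj u v) ∨ (∀ u < v, ¬ G.Adj u v))
    (hdeg : G'.degree v = G.degree v) (hlater : ∀ w, v < w → (G'.Adj v w ↔ G.Adj v w)) :
    G'.neighborFinset v = G.neighborFinset v := by
  rcases hG with hall | hnone
  · refine neighborFinset_eq_of_subset_of_degree_le (fun w hw => ?_) hdeg.ge
    rw [mem_neighborFinset] at hw ⊢
    rcases lt_trichotomy w v with hwv | rfl | hvw
    · exact (hall w hwv).symm
    · exact (G'.irrefl hw).elim
    · exact (hlater w hvw).mp hw
  · refine (neighborFinset_eq_of_subset_of_degree_le (fun w hw => ?_) hdeg.le).symm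
    rw [mem_neighborFinset] at hw ⊢
    rcases lt_trichotomy w v with hwv | rfl | hvw
    · exact absurd hw.symm (hnone w hwv)
    · exact (G.irrefl hw).elim
    · exact (hlater w hvw).mpr hw

theorem eq_of_degree_eq_of_isThresholdOrdered [LinearOrder V] (hG : G.IsThresholdOrdered)
    (hdeg : ∀ v, G'.degree v = G.degree v) : G' = G := by
  have hnbr : ∀ v, G'.neighborFinset v = G.neighborFinset v := by
    intro v
    induction v using WellFoundedGT.induction with
    | _ v ih =>
      refine neighborFinset_eq_of_adj_iff_of_degree_eq (hG v) (hdeg v) fun w hvw => ?_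
      simpa [adj_comm] using congr(v ∈ $(ih w hvw))
  ext u v
  simpa using congr(v ∈ $(hnbr u))

end Degree

end SimpleGraph

open SimpleGraph

theorem IsThreshold.exists_isThresholdOrdered_comap {n : ℕ} {g : SimpleGraph (Fin n)}
    (hg : IsThreshold g) : ∃ σ : Equiv.Perm (Fin n), (g.comap σ).IsThresholdOrdered := by
  obtain ⟨σ, c, hc⟩ := hg
  refine ⟨σ, fun j => ?_⟩
  cases hcj : c j
  · exact .inr fun i hij => by simp [hc i j hij, hcj]
  · exact .inl fun i hij => by simp [hc i j hij, hcj]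

theorem stmt_19 {n : ℕ} (g g' : SimpleGraph (Fin n))
    [DecidableRel g.Adj] [DecidableRel g'.Adj]
    (hth : IsThreshold g) (hdeg : ∀ v, g'.degree v = g.degree v) :
    g' = g := by
  obtain ⟨σ, hσ⟩ := hth.exists_isThresholdOrdered_comap
  have hcomap : g'.comap σ = g.comap σ :=
    eq_of_degree_eq_of_isThresholdOrdered hσ fun v => by
      rw [← (Iso.comap σ g').degree_eq v, ← (Iso.comap σ g).degree_eq v]
      exact hdeg (σ v)
  ext u v
  simpa using congr(($hcomap).Adj (σ.symm u) (σ.symm v))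
end
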